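/- (Laplacian of the coordinate functions of the first family S₁) For the surface S₁ : r(t,s) = (t, a(t), s) one has, at every (t,s) ∈ I × ℝ: Δ(r₁) = a′·a″/(1 + a′²)², Δ(r₂) = −a″/(1 + a′²)², and Δ(r₃) = −a″·(t + a·a′)/(2(1 + a′²)²), where r₁(t,s) = t, r₂(t,s) = a(t), r₃(t,s) = s. -/

import Mathlib

noncomputable section

/-- Partial derivative with respect to the first (t) variable. -/
def pdx (f : ℝ × ℝ → ℝ) : ℝ × ℝ → ℝ := fun p => fderiv ℝ f p (1, 0)

/-- Partial derivative with respect to the second (s) variable. -/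
def pdy (f : ℝ × ℝ → ℝ) : ℝ × ℝ → ℝ := fun p => fderiv ℝ f p (0, 1)

/-- First fundamental form coefficient `E = 1 + a′² + ¼(a − t a′)²` of the ruled surface
`S₁ : r(t,s) = (t, a(t), s)` in the Heisenberg group `H₃`. -/
def aE (a : ℝ → ℝ) (t : ℝ) : ℝ := 1 + deriv a t ^ 2 + (a t - t * deriv a t) ^ 2 / 4

/-- First fundamental form coefficient `F = ½(a − t a′)` of `S₁`. -/
def aF (a : ℝ → ℝ) (t : ℝ) : ℝ := (a t - t * deriv a t) / 2

/-- `W = √(EG − F²) = √(1 + a′²)` for `S₁` (here `G = 1`). -/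
def aW (a : ℝ → ℝ) (t : ℝ) : ℝ := Real.sqrt (1 + deriv a t ^ 2)

/-- The Laplace–Beltrami operator of `S₁ : r(t,s) = (t, a(t), s)`, with the sign convention
`Δφ = −(1/W)[∂_t((G φ_t − F φ_s)/W) + ∂_s((−F φ_t + E φ_s)/W)]`, `G = 1`. -/
def lap1 (a : ℝ → ℝ) (φ : ℝ × ℝ → ℝ) : ℝ × ℝ → ℝ := fun p =>
  -(1 / aW a p.1) *
    (pdx (fun q => (1 * pdx φ q - aF a q.1 * pdy φ q) / aW a q.1) p +
     pdy (fun q => (-(aF a q.1) * pdx φ q + aE a q.1 * pdy φ q) / aW a q.1) p)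

/-! Every coordinate function of `S₁` has `φ_t = u(t)` and constant `φ_s = c`, so both fluxes in
`Δφ` depend on `t` alone: the `∂_s` term vanishes and `Δφ = −(1/W) · ((u − c F)/W)′`.
Since `W W′ = a′a″`, this equals `−((u − c F)′ (1 + a′²) − (u − c F) a′a″) / (1 + a′²)²`,
and `F′ = −t a″/2` gives the three formulas. -/

theorem fderiv_comp_fst {𝕜 E F G : Type*} [NontriviallyNormedField 𝕜]
    [NormedAddCommGroup E] [NormedSpace 𝕜 E] [NormedAddCommGroup F] [NormedSpace 𝕜 F]
    [NormedAddCommGroup G] [NormedSpace 𝕜 G] (h : E → G) (p : E × F) :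
    fderiv 𝕜 (h ∘ Prod.fst) p = (fderiv 𝕜 h p.1).comp (ContinuousLinearMap.fst 𝕜 E F) := by
  by_cases hd : DifferentiableAt 𝕜 h p.1
  · rw [fderiv_comp p hd differentiableAt_fst, fderiv_fst]
  · have hnd : ¬ DifferentiableAt 𝕜 (h ∘ Prod.fst) p := fun hcomp =>
      hd (hcomp.comp p.1 (differentiableAt_id.prodMk (differentiableAt_const p.2)) :
        DifferentiableAt 𝕜 ((h ∘ Prod.fst) ∘ fun x => (x, p.2)) p.1)
    rw [fderiv_zero_of_not_differentiableAt hnd, fderiv_zero_of_not_differentiableAt hd,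
      ContinuousLinearMap.zero_comp]

theorem pdx_comp_fst (h : ℝ → ℝ) : pdx (fun q => h q.1) = fun q => deriv h q.1 := by
  funext q
  simp [pdx, ← Function.comp_def h Prod.fst, fderiv_comp_fst]

theorem pdy_comp_fst (h : ℝ → ℝ) : pdy (fun q => h q.1) = fun _ => 0 := by
  funext q
  simp [pdy, ← Function.comp_def h Prod.fst, fderiv_comp_fst]

theorem pdx_fst : pdx Prod.fst = fun _ => 1 := by
  funext q
  simp [pdx, fderiv_fst]

theorem pdy_fst : pdy Prod.fst = fun _ => 0 := by
  funext q
  simp [pdy, fderiv_fst]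

theorem pdx_snd : pdx Prod.snd = fun _ => 0 := by
  funext q
  simp [pdx, fderiv_snd]

theorem pdy_snd : pdy Prod.snd = fun _ => 1 := by
  funext q
  simp [pdy, fderiv_snd]

theorem lap1_eq_deriv {a : ℝ → ℝ} {φ : ℝ × ℝ → ℝ} {u : ℝ → ℝ} {c : ℝ}
    (hx : pdx φ = fun q => u q.1) (hy : pdy φ = fun _ => c) (t s : ℝ) :
    lap1 a φ (t, s) = -(1 / aW a t) * deriv (fun x => (u x - c * aF a x) / aW a x) t := by
  simp only [lap1, hx, hy]
  rw [pdy_comp_fst (fun x => (-aF a x * u x + aE a x * c) / aW a x)]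
  simp only [mul_comm (aF a _) c, one_mul, add_zero]
  rw [pdx_comp_fst (fun x => (u x - c * aF a x) / aW a x)]

theorem hasDerivAt_aW {a : ℝ → ℝ} {a₂ t : ℝ} (ha' : HasDerivAt (deriv a) a₂ t) :
    HasDerivAt (aW a) (deriv a t * a₂ / aW a t) t := by
  have hpos : 0 < 1 + deriv a t ^ 2 := by positivity
  have hW : aW a t ≠ 0 := (Real.sqrt_pos.2 hpos).ne'
  refine (((hasDerivAt_const t 1).add (ha'.pow 2)).sqrt hpos.ne').congr_deriv ?_
  simp only [aW, Pi.add_apply, Pi.pow_apply] at hW ⊢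
  field_simp
  ring

theorem lap1_eq_of_hasDerivAt {a : ℝ → ℝ} {φ : ℝ × ℝ → ℝ} {u : ℝ → ℝ} {c g' a₂ t : ℝ}
    (hx : pdx φ = fun q => u q.1) (hy : pdy φ = fun _ => c)
    (hg : HasDerivAt (fun x => u x - c * aF a x) g' t) (ha' : HasDerivAt (deriv a) a₂ t)
    (s : ℝ) :
    lap1 a φ (t, s) = -(g' * (1 + deriv a t ^ 2) - (u t - c * aF a t) * deriv a t * a₂) /
      (1 + deriv a t ^ 2) ^ 2 := by
  have hpos : 0 < 1 + deriv a t ^ 2 := by positivity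
  have hW : aW a t ≠ 0 := (Real.sqrt_pos.2 hpos).ne'
  have hW2 : aW a t ^ 2 = 1 + deriv a t ^ 2 := Real.sq_sqrt hpos.le
  have hquot : HasDerivAt (fun x => (u x - c * aF a x) / aW a x)
      ((g' * aW a t - (u t - c * aF a t) * (deriv a t * a₂ / aW a t)) / aW a t ^ 2) t :=
    hg.div (hasDerivAt_aW ha') hW
  rw [lap1_eq_deriv hx hy, hquot.deriv, ← hW2]
  field_simp

theorem hasDerivAt_aF {a : ℝ → ℝ} {a₂ t : ℝ} (ha : HasDerivAt a (deriv a t) t)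
    (ha' : HasDerivAt (deriv a) a₂ t) : HasDerivAt (aF a) (-(t * a₂) / 2) t :=
  ((ha.sub ((hasDerivAt_id' t).mul ha')).div_const 2).congr_deriv (by ring)

theorem laplacian_coordinates_S1_general
    (I : Set ℝ) (hI : IsOpen I)
    (a : ℝ → ℝ) (ha : ContDiffOn ℝ (⊤ : ℕ∞) a I) :
    ∀ t ∈ I, ∀ s : ℝ,
      lap1 a (fun q => q.1) (t, s) =
          deriv a t * deriv (deriv a) t / (1 + deriv a t ^ 2) ^ 2 ∧
      lap1 a (fun q => a q.1) (t, s) =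
          -(deriv (deriv a) t) / (1 + deriv a t ^ 2) ^ 2 ∧
      lap1 a (fun q => q.2) (t, s) =
          -(deriv (deriv a) t) * (t + a t * deriv a t) /
            (2 * (1 + deriv a t ^ 2) ^ 2) := by
  intro t ht s
  have hnhds : I ∈ nhds t := hI.mem_nhds ht
  have hA : HasDerivAt a (deriv a t) t :=
    ((ha.contDiffAt hnhds).differentiableAt (by simp)).hasDerivAt
  have hda : ContDiffOn ℝ (⊤ : ℕ∞) (deriv a) I := ha.deriv_of_isOpen hI (by simp)
  have hA' : HasDerivAt (deriv a) (deriv (deriv a) t) t :=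
    ((hda.contDiffAt hnhds).differentiableAt (by simp)).hasDerivAt
  have hF := hasDerivAt_aF hA hA'
  refine ⟨?_, ?_, ?_⟩
  · rw [lap1_eq_of_hasDerivAt (φ := fun q => q.1) pdx_fst pdy_fst
      ((hasDerivAt_const t 1).sub (hF.const_mul 0)) hA']
    ring
  · rw [lap1_eq_of_hasDerivAt (pdx_comp_fst a) (pdy_comp_fst a) (hA'.sub (hF.const_mul 0)) hA']
    field_simp
    ring
  · rw [lap1_eq_of_hasDerivAt (φ := fun q => q.2) pdx_snd pdy_snd
      ((hasDerivAt_const t 0).sub (hF.const_mul 1)) hA', aF]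
    field_simp
    ring

/-- **Laplacian of the coordinate functions of the first family `S₁`**:
for `S₁ : r(t,s) = (t, a(t), s)`, at every `(t,s) ∈ I × ℝ` one has
`Δr₁ = a′a″/(1 + a′²)²`, `Δr₂ = −a″/(1 + a′²)²`, and
`Δr₃ = −a″(t + a·a′)/(2(1 + a′²)²)`. -/
theorem laplacian_coordinates_S1
    (I : Set ℝ) (hI : IsOpen I) (hIne : I.Nonempty) (hIconn : I.OrdConnected)
    (a : ℝ → ℝ) (ha : ContDiffOn ℝ (⊤ : ℕ∞) a I) :
    ∀ t ∈ I, ∀ s : ℝ,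
      lap1 a (fun q => q.1) (t, s) =
          deriv a t * deriv (deriv a) t / (1 + deriv a t ^ 2) ^ 2 ∧
      lap1 a (fun q => a q.1) (t, s) =
          -(deriv (deriv a) t) / (1 + deriv a t ^ 2) ^ 2 ∧
      lap1 a (fun q => q.2) (t, s) =
          -(deriv (deriv a) t) * (t + a t * deriv a t) /
            (2 * (1 + deriv a t ^ 2) ^ 2) :=
  laplacian_coordinates_S1_general I hI a ha
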